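/- arXiv:2102.03653 — 2 statements merged into one kernel-verified Lean document; each statement's English description precedes it below -/
import Mathlib

section
/- For real numbers a and b, √(a² + b²) − a − b = 0 if and only if a ≥ 0, b ≥ 0, and a·b = 0. -/
open Matrix

theorem ncp_fischer_burmeister (a b : ℝ) :
    Real.sqrt (a ^ 2 + b ^ 2) - a - b = 0 ↔ 0 ≤ a ∧ 0 ≤ b ∧ a * b = 0 := by
  constructor
  · intro h
    have heq : Real.sqrt (a ^ 2 + b ^ 2) = a + b := by linarith
    have hnn : 0 ≤ a + b := heq ▸ Real.sqrt_nonneg _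
    have hsq : a ^ 2 + b ^ 2 = (a + b) ^ 2 := by
      have := Real.sq_sqrt (by positivity : (0:ℝ) ≤ a ^ 2 + b ^ 2)
      rw [heq] at this; linarith
    have hab : a * b = 0 := by nlinarith
    rcases mul_eq_zero.mp hab with h0 | h0 <;>
      refine ⟨?_, ?_, hab⟩ <;> simp [h0] at hnn ⊢ <;> linarith
  · rintro ⟨ha, hb, hab⟩
    have : a ^ 2 + b ^ 2 = (a + b) ^ 2 := by nlinarith
    rw [this, Real.sqrt_sq (by linarith)]; ring
end

section
/- Let A ∈ ℝ^{m×m} be symmetric positive definite and B ∈ ℝ^m. Then the linear complementarity problem LCP(A,B) — find λ ∈ ℝ^m with B + Aλ ≥ 0, λ ≥ 0, λ * (B + Aλ) = 0 — has a unique solution. -/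
open Matrix Filter

/-! A minimiser `x` of `½ xᵀAx + Bᵀx` over the nonnegative orthant satisfies the variational
inequality `0 ≤ (y - x)ᵀ(B + Ax)` for all `y ≥ 0`; testing it against `y = x + eᵢ` and
`y = 0` yields the complementarity conditions. Positive definiteness makes the objective coercive,
so the minimiser exists. For uniqueness, complementarity of two solutions `x`, `y` gives
`(x - y)ᵀA(x - y) = -(xᵀ(B + Ay) + yᵀ(B + Ax)) ≤ 0`. -/

variable {ι : Type*} [Fintype ι]

def IsLCPSolution (A : Matrix ι ι ℝ) (B x : ι → ℝ) : Prop :=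
  (∀ i, 0 ≤ (B + A *ᵥ x) i) ∧ (∀ i, 0 ≤ x i) ∧ (∀ i, x i * (B + A *ᵥ x) i = 0)

noncomputable def lcpObjective (A : Matrix ι ι ℝ) (B x : ι → ℝ) : ℝ :=
  2⁻¹ * (x ⬝ᵥ A *ᵥ x) + B ⬝ᵥ x

theorem IsLCPSolution.eq_of_posDef {A : Matrix ι ι ℝ} {B x y : ι → ℝ} (hA : A.PosDef)
    (hx : IsLCPSolution A B x) (hy : IsLCPSolution A B y) : x = y := by
  obtain ⟨hwx, hx0, hxw⟩ := hx
  obtain ⟨hwy, hy0, hyw⟩ := hy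
  by_contra hne
  have hpos : 0 < (x - y) ⬝ᵥ A *ᵥ (x - y) := by
    simpa using hA.dotProduct_mulVec_pos (sub_ne_zero.mpr hne)
  have hnonpos : (x - y) ⬝ᵥ A *ᵥ (x - y) ≤ 0 := by
    have hdiff : A *ᵥ (x - y) = (B + A *ᵥ x) - (B + A *ᵥ y) := by rw [mulVec_sub]; abel
    have hexpand : (x - y) ⬝ᵥ A *ᵥ (x - y) =
        -∑ i, (x i * (B + A *ᵥ y) i + y i * (B + A *ᵥ x) i) := by
      simp only [hdiff, dotProduct, Pi.sub_apply, ← Finset.sum_neg_distrib]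
      refine Finset.sum_congr rfl fun i _ => ?_
      linear_combination hxw i + hyw i
    rw [hexpand, neg_nonpos]
    exact Finset.sum_nonneg fun i _ =>
      add_nonneg (mul_nonneg (hx0 i) (hwy i)) (mul_nonneg (hy0 i) (hwx i))
  exact hpos.not_ge hnonpos

theorem nonneg_and_mul_eq_zero_of_forall_dotProduct_sub_nonneg {x w : ι → ℝ} (hx : 0 ≤ x)
    (h : ∀ y, 0 ≤ y → 0 ≤ (y - x) ⬝ᵥ w) : 0 ≤ w ∧ ∀ i, x i * w i = 0 := by
  classical
  have hw : 0 ≤ w := fun i => by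
    simpa using h (x + Pi.single i 1) (add_nonneg hx (Pi.single_nonneg.mpr zero_le_one))
  refine ⟨hw, ?_⟩
  have hsum : ∑ i, x i * w i = 0 :=
    le_antisymm (by simpa [dotProduct] using h 0 le_rfl)
      (Finset.sum_nonneg fun i _ => mul_nonneg (hx i) (hw i))
  exact fun i => (Finset.sum_eq_zero_iff_of_nonneg fun j _ => mul_nonneg (hx j) (hw j)).mp hsum
    i (Finset.mem_univ i)

theorem lcpObjective_add_smul {A : Matrix ι ι ℝ} (hA : A.IsSymm) (B x d : ι → ℝ)
    (t : ℝ) : lcpObjective A B (x + t • d) =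
      lcpObjective A B x + t * (d ⬝ᵥ (B + A *ᵥ x)) + t ^ 2 / 2 * (d ⬝ᵥ A *ᵥ d) := by
  have hsymm : x ⬝ᵥ A *ᵥ d = d ⬝ᵥ A *ᵥ x := by
    rw [← dotProduct_transpose_mulVec, hA.eq]
  simp only [lcpObjective, mulVec_add, mulVec_smul, add_dotProduct, dotProduct_add,
    smul_dotProduct, dotProduct_smul, smul_eq_mul, hsymm, dotProduct_comm B d]
  ring

theorem nonneg_of_forall_mul_add_sq_mul_nonneg {a b : ℝ}
    (h : ∀ t, 0 < t → t ≤ 1 → 0 ≤ t * a + t ^ 2 * b) : 0 ≤ a := by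
  by_contra! ha
  set t := min 1 (-a / (|b| + 1))
  have ht : 0 < t := lt_min one_pos (div_pos (neg_pos.mpr ha) (by positivity))
  have htb : t * (|b| + 1) ≤ -a := (le_div_iff₀ (by positivity)).mp (min_le_right _ _)
  have hat := h t ht (min_le_left _ _)
  nlinarith [le_abs_self b, abs_nonneg b]

theorem dotProduct_sub_nonneg_of_isMinOn_lcpObjective {A : Matrix ι ι ℝ} (hA : A.IsSymm)
    {B x y : ι → ℝ} {s : Set (ι → ℝ)} (hs : Convex ℝ s) (hx : x ∈ s) (hy : y ∈ s)
    (hmin : IsMinOn (lcpObjective A B) s x) : 0 ≤ (y - x) ⬝ᵥ (B + A *ᵥ x) := by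
  refine nonneg_of_forall_mul_add_sq_mul_nonneg (b := ((y - x) ⬝ᵥ A *ᵥ (y - x)) / 2)
    fun t ht ht1 => ?_
  have hle : lcpObjective A B x ≤ lcpObjective A B (x + t • (y - x)) :=
    hmin (hs.add_smul_sub_mem hx hy ⟨ht.le, ht1⟩)
  rw [lcpObjective_add_smul hA] at hle
  linarith

theorem Matrix.PosDef.exists_pos_mul_norm_sq_le {A : Matrix ι ι ℝ} (hA : A.PosDef) :
    ∃ α > 0, ∀ x, α * ‖x‖ ^ 2 ≤ x ⬝ᵥ A *ᵥ x := by
  cases isEmpty_or_nonempty ι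
  · exact ⟨1, one_pos, fun x => by simp [Subsingleton.elim x 0]⟩
  have hq : Continuous fun x : ι → ℝ => x ⬝ᵥ A *ᵥ x := by fun_prop
  obtain ⟨x₀, hx₀, hmin⟩ := (isCompact_sphere (0 : ι → ℝ) 1).exists_isMinOn
    (NormedSpace.sphere_nonempty.mpr zero_le_one) hq.continuousOn
  have hx₀ne : x₀ ≠ 0 := ne_zero_of_mem_unit_sphere ⟨x₀, hx₀⟩
  refine ⟨x₀ ⬝ᵥ A *ᵥ x₀, by simpa using hA.dotProduct_mulVec_pos hx₀ne, fun x => ?_⟩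
  rcases eq_or_ne x 0 with rfl | hx
  · simp
  set u := ‖x‖⁻¹ • x
  have hu : u ∈ Metric.sphere (0 : ι → ℝ) 1 := by
    simp [u, norm_smul, inv_mul_cancel₀ (norm_ne_zero_iff.mpr hx)]
  have hxu : x = ‖x‖ • u := by
    simp [u, smul_smul, mul_inv_cancel₀ (norm_ne_zero_iff.mpr hx)]
  calc x₀ ⬝ᵥ A *ᵥ x₀ * ‖x‖ ^ 2
      ≤ u ⬝ᵥ A *ᵥ u * ‖x‖ ^ 2 := by gcongr; exact hmin hu
    _ = x ⬝ᵥ A *ᵥ x := by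
      conv_rhs => rw [hxu]
      simp only [mulVec_smul, smul_dotProduct, dotProduct_smul, smul_eq_mul]
      ring

theorem neg_sum_abs_mul_norm_le_dotProduct (B x : ι → ℝ) :
    -((∑ i, |B i|) * ‖x‖) ≤ B ⬝ᵥ x := by
  rw [Finset.sum_mul, ← Finset.sum_neg_distrib]
  refine Finset.sum_le_sum fun i _ => neg_le_of_abs_le ?_
  rw [abs_mul]
  exact mul_le_mul_of_nonneg_left (norm_le_pi_norm x i) (abs_nonneg _)

theorem Matrix.PosDef.tendsto_lcpObjective_cocompact {A : Matrix ι ι ℝ} (hA : A.PosDef)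
    (B : ι → ℝ) : Tendsto (lcpObjective A B) (cocompact _) atTop := by
  obtain ⟨α, hα, hαA⟩ := hA.exists_pos_mul_norm_sq_le
  set C := ∑ i, |B i|
  have hlower : ∀ x, ‖x‖ * (α / 2 * ‖x‖ + -C) ≤ lcpObjective A B x := fun x => by
    have hquad := hαA x
    have hlin := neg_sum_abs_mul_norm_le_dotProduct B x
    simp only [lcpObjective]
    nlinarith
  refine tendsto_atTop_mono hlower (tendsto_norm_cocompact_atTop.atTop_mul_atTop₀ ?_)
  exact tendsto_atTop_add_const_right _ _
    (tendsto_norm_cocompact_atTop.const_mul_atTop (by positivity))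

theorem Matrix.PosDef.exists_isMinOn_lcpObjective {A : Matrix ι ι ℝ} (hA : A.PosDef)
    (B : ι → ℝ) {s : Set (ι → ℝ)} (hs : IsClosed s) (hne : s.Nonempty) :
    ∃ x ∈ s, IsMinOn (lcpObjective A B) s x := by
  obtain ⟨x₀, hx₀⟩ := hne
  have hcont : Continuous (lcpObjective A B) := by unfold lcpObjective; fun_prop
  exact hcont.continuousOn.exists_isMinOn' hs hx₀
    (((hA.tendsto_lcpObjective_cocompact B).eventually (eventually_ge_atTop _)).filter_mono
      inf_le_left)

theorem Matrix.PosDef.exists_isLCPSolution {A : Matrix ι ι ℝ} (hA : A.PosDef) (B : ι → ℝ) :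
    ∃ x, IsLCPSolution A B x := by
  obtain ⟨x, hx, hmin⟩ := hA.exists_isMinOn_lcpObjective B isClosed_Ici Set.nonempty_Ici
  have hsymm : A.IsSymm := isHermitian_iff_isSymm.mp hA.isHermitian
  obtain ⟨hw, hxw⟩ := nonneg_and_mul_eq_zero_of_forall_dotProduct_sub_nonneg hx
    fun y hy => dotProduct_sub_nonneg_of_isMinOn_lcpObjective hsymm (convex_Ici 0) hx hy hmin
  exact ⟨x, hw, hx, hxw⟩

theorem lcp_posdef_exists_unique {m : ℕ} (A : Matrix (Fin m) (Fin m) ℝ)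
    (B : Fin m → ℝ) (hA : A.PosDef) :
    ∃! lam : Fin m → ℝ, (∀ i, 0 ≤ (B + A.mulVec lam) i) ∧
      (∀ i, 0 ≤ lam i) ∧ (∀ i, lam i * (B + A.mulVec lam) i = 0) := by
  obtain ⟨x, hx⟩ := hA.exists_isLCPSolution B
  exact ⟨x, hx, fun y hy => IsLCPSolution.eq_of_posDef hA hy hx⟩
end
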